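/- Let $H$ be a real Hilbert space with ONB $\{w_n\}$ and $\lambda_n>0$ nondecreasing to infinity. Suppose a trilinear form $b$ satisfies $|b(x,y,z)| \le \|x\|_{1/2}\|y\|_{3/2}\|z\|_{1/2}$ and $|b(x,y,z)| \le \|x\|_{5/6}\|y\|_{1}\|z\|_{2/3}$, and that $b(x,y,y)=0$ for all $x,y$. Then for every $u$ with $\|u\|_{5/6}<\infty$ and every $\kappa>0$, $|b(u, u^l_\kappa, u)| \le 2\,\|u\|_{5/6}^2\, \|u^h_\kappa\|_{5/6}$, where $u^l_\kappa, u^h_\kappa$ are the low/high parts at cutoff $\kappa$ (paper's $\kappa$-power convention for the frequency inequalities). Consequently $b(u, u^l_\kappa, u) \to 0$ as $\kappa \to \infty$. -/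

import Mathlib

/-!
Split `u = uˡ + uʰ` at the cutoff `κ`. Since `b x y y = 0`, the trilinear form expands as
`b u uˡ u = b uˡ uˡ uʰ + b uʰ uˡ uʰ`. On vectors whose spectrum lies below (resp. above) `κ`,
the norm of order `s` is at most `κ ^ ((s - t) / 2)` times the norm of order `t` when `t ≤ s`
(resp. `s ≤ t`). Bounding the first term with the `(5/6, 1, 2/3)` estimate and the second with
the `(1/2, 3/2, 1/2)` estimate, the powers of `κ` cancel exactly, leaving
`‖u‖²_{5/6} ‖uʰ‖_{5/6}` for each. Finally `‖uʰ‖_{5/6}` is a tail of the convergent series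
defining `‖u‖_{5/6}`, so it tends to `0` by dominated convergence.
-/

open Filter
open scoped ENNReal InnerProductSpace

/-- `‖v‖ₛ = (∑ λₙˢ ⟪v,wₙ⟫²)^{1/2}` valued in `[0,∞]`. -/
noncomputable def hilbNorm {H : Type*} [NormedAddCommGroup H] [InnerProductSpace ℝ H]
    (w : ℕ → H) (lam : ℕ → ℝ) (s : ℝ) (v : H) : ℝ≥0∞ :=
  (∑' n, ENNReal.ofReal (lam n ^ s * (⟪v, w n⟫_ℝ) ^ 2)) ^ (1/2 : ℝ)

open Topology MeasureTheory

section HilbNorm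

variable {H : Type*} [NormedAddCommGroup H] [InnerProductSpace ℝ H] {w : ℕ → H} {lam : ℕ → ℝ}

lemma hilbNorm_le_of_coeff_eq_or_eq_zero {s : ℝ} {u v : H}
    (h : ∀ n, ⟪v, w n⟫_ℝ = ⟪u, w n⟫_ℝ ∨ ⟪v, w n⟫_ℝ = 0) :
    hilbNorm w lam s v ≤ hilbNorm w lam s u := by
  refine ENNReal.rpow_le_rpow (ENNReal.tsum_le_tsum fun n => ?_) (by norm_num)
  rcases h n with h | h <;> simp [h]

lemma hilbNorm_le_mul_of_forall {s t C : ℝ} (hC : 0 ≤ C) {x y : H}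
    (h : ∀ n, lam n ^ s * ⟪x, w n⟫_ℝ ^ 2 ≤ C ^ 2 * (lam n ^ t * ⟪y, w n⟫_ℝ ^ 2)) :
    hilbNorm w lam s x ≤ ENNReal.ofReal C * hilbNorm w lam t y := by
  have hC' : ENNReal.ofReal C = ENNReal.ofReal (C ^ 2) ^ (1/2 : ℝ) := by
    rw [ENNReal.ofReal_rpow_of_nonneg (sq_nonneg C) (by norm_num), ← Real.sqrt_eq_rpow,
      Real.sqrt_sq hC]
  rw [hC', hilbNorm, hilbNorm, ← ENNReal.mul_rpow_of_nonneg _ _ (by norm_num),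
    ← ENNReal.tsum_mul_left]
  gcongr with n
  rw [← ENNReal.ofReal_mul (sq_nonneg C)]
  exact ENNReal.ofReal_le_ofReal (h n)

lemma hilbNorm_le_rpow_mul (hpos : ∀ n, 0 < lam n) {s t κ : ℝ} (hκ : 0 ≤ κ) {v : H}
    (h : ∀ n, ⟪v, w n⟫_ℝ ≠ 0 → lam n ^ (s - t) ≤ κ ^ (s - t)) :
    hilbNorm w lam s v ≤ ENNReal.ofReal (κ ^ ((s - t) / 2)) * hilbNorm w lam t v := by
  refine hilbNorm_le_mul_of_forall (Real.rpow_nonneg hκ _) fun n => ?_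
  have hsq : (κ ^ ((s - t) / 2)) ^ 2 = κ ^ (s - t) := by
    rw [← Real.rpow_mul_natCast hκ]; ring_nf
  rw [hsq]
  by_cases hv : ⟪v, w n⟫_ℝ = 0
  · simp [hv]
  calc lam n ^ s * ⟪v, w n⟫_ℝ ^ 2 = lam n ^ (s - t) * (lam n ^ t * ⟪v, w n⟫_ℝ ^ 2) := by
        rw [← mul_assoc, ← Real.rpow_add (hpos n), sub_add_cancel]
    _ ≤ κ ^ (s - t) * (lam n ^ t * ⟪v, w n⟫_ℝ ^ 2) :=
        mul_le_mul_of_nonneg_right (h n hv)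
          (mul_nonneg (Real.rpow_nonneg (hpos n).le _) (sq_nonneg _))

def IsLowFreq (w : ℕ → H) (lam : ℕ → ℝ) (κ : ℝ) (v : H) : Prop :=
  ∀ n, κ < lam n → ⟪v, w n⟫_ℝ = 0

def IsHighFreq (w : ℕ → H) (lam : ℕ → ℝ) (κ : ℝ) (v : H) : Prop :=
  ∀ n, lam n ≤ κ → ⟪v, w n⟫_ℝ = 0

lemma IsLowFreq.hilbNorm_le {κ : ℝ} {v : H} (hv : IsLowFreq w lam κ v)
    (hpos : ∀ n, 0 < lam n) (hκ : 0 ≤ κ) {s t : ℝ} (hts : t ≤ s) :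
    hilbNorm w lam s v ≤ ENNReal.ofReal (κ ^ ((s - t) / 2)) * hilbNorm w lam t v :=
  hilbNorm_le_rpow_mul hpos hκ fun n hn =>
    Real.rpow_le_rpow (hpos n).le (not_lt.mp (mt (hv n) hn)) (sub_nonneg.mpr hts)

lemma IsHighFreq.hilbNorm_le {κ : ℝ} {v : H} (hv : IsHighFreq w lam κ v)
    (hpos : ∀ n, 0 < lam n) (hκ : 0 < κ) {s t : ℝ} (hst : s ≤ t) :
    hilbNorm w lam s v ≤ ENNReal.ofReal (κ ^ ((s - t) / 2)) * hilbNorm w lam t v :=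
  hilbNorm_le_rpow_mul hpos hκ.le fun n hn =>
    Real.rpow_le_rpow_of_nonpos hκ (not_le.mp (mt (hv n) hn)).le (sub_nonpos.mpr hst)

end HilbNorm

lemma ENNReal.ofReal_rpow_mul_ofReal_rpow_neg {κ : ℝ} (hκ : 0 < κ) (a : ℝ) :
    ENNReal.ofReal (κ ^ a) * ENNReal.ofReal (κ ^ (-a)) = 1 := by
  rw [← ENNReal.ofReal_mul (Real.rpow_nonneg hκ.le _), ← Real.rpow_add hκ, add_neg_cancel,
    Real.rpow_zero, ENNReal.ofReal_one]

section Bounds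

variable {H : Type*} [NormedAddCommGroup H] [InnerProductSpace ℝ H] {w : ℕ → H} {lam : ℕ → ℝ}
  {b : H →ₗ[ℝ] H →ₗ[ℝ] H →ₗ[ℝ] ℝ} {κ : ℝ} {x y z : H}

lemma ofReal_abs_le_of_isLowFreq_of_isHighFreq (hpos : ∀ n, 0 < lam n)
    (hb : ∀ x y z : H, ENNReal.ofReal |b x y z| ≤
      hilbNorm w lam (5/6) x * hilbNorm w lam 1 y * hilbNorm w lam (2/3) z)
    (hκ : 0 < κ) (hy : IsLowFreq w lam κ y) (hz : IsHighFreq w lam κ z) :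
    ENNReal.ofReal |b x y z| ≤
      hilbNorm w lam (5/6) x * hilbNorm w lam (5/6) y * hilbNorm w lam (5/6) z := by
  have hy' : hilbNorm w lam 1 y ≤
      ENNReal.ofReal (κ ^ (1/12 : ℝ)) * hilbNorm w lam (5/6) y := by
    convert hy.hilbNorm_le hpos hκ.le (s := 1) (t := 5/6) (by norm_num) using 4; norm_num
  have hz' : hilbNorm w lam (2/3) z ≤
      ENNReal.ofReal (κ ^ (-(1/12) : ℝ)) * hilbNorm w lam (5/6) z := by
    convert hz.hilbNorm_le hpos hκ (s := 2/3) (t := 5/6) (by norm_num) using 4; norm_num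
  calc ENNReal.ofReal |b x y z|
      ≤ hilbNorm w lam (5/6) x * hilbNorm w lam 1 y * hilbNorm w lam (2/3) z := hb x y z
    _ ≤ hilbNorm w lam (5/6) x * (ENNReal.ofReal (κ ^ (1/12 : ℝ)) * hilbNorm w lam (5/6) y) *
          (ENNReal.ofReal (κ ^ (-(1/12) : ℝ)) * hilbNorm w lam (5/6) z) := by gcongr
    _ = ENNReal.ofReal (κ ^ (1/12 : ℝ)) * ENNReal.ofReal (κ ^ (-(1/12) : ℝ)) *
          (hilbNorm w lam (5/6) x * hilbNorm w lam (5/6) y * hilbNorm w lam (5/6) z) := by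
        ring
    _ = hilbNorm w lam (5/6) x * hilbNorm w lam (5/6) y * hilbNorm w lam (5/6) z := by
        rw [ENNReal.ofReal_rpow_mul_ofReal_rpow_neg hκ, one_mul]

lemma ofReal_abs_le_of_isHighFreq_of_isLowFreq_of_isHighFreq (hpos : ∀ n, 0 < lam n)
    (hb : ∀ x y z : H, ENNReal.ofReal |b x y z| ≤
      hilbNorm w lam (1/2) x * hilbNorm w lam (3/2) y * hilbNorm w lam (1/2) z)
    (hκ : 0 < κ) (hx : IsHighFreq w lam κ x) (hy : IsLowFreq w lam κ y)
    (hz : IsHighFreq w lam κ z) :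
    ENNReal.ofReal |b x y z| ≤
      hilbNorm w lam (5/6) x * hilbNorm w lam (5/6) y * hilbNorm w lam (5/6) z := by
  have high : ∀ {v}, IsHighFreq w lam κ v → hilbNorm w lam (1/2) v ≤
      ENNReal.ofReal (κ ^ (-(1/6) : ℝ)) * hilbNorm w lam (5/6) v := fun hv => by
    convert hv.hilbNorm_le hpos hκ (s := 1/2) (t := 5/6) (by norm_num) using 4; norm_num
  have hy' : hilbNorm w lam (3/2) y ≤
      ENNReal.ofReal (κ ^ (1/3 : ℝ)) * hilbNorm w lam (5/6) y := by
    convert hy.hilbNorm_le hpos hκ.le (s := 3/2) (t := 5/6) (by norm_num) using 4; norm_num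
  have hcancel : ENNReal.ofReal (κ ^ (-(1/6) : ℝ)) * ENNReal.ofReal (κ ^ (1/3 : ℝ)) *
      ENNReal.ofReal (κ ^ (-(1/6) : ℝ)) = 1 := by
    rw [← ENNReal.ofReal_mul (Real.rpow_nonneg hκ.le _),
      ← ENNReal.ofReal_mul (by positivity), ← Real.rpow_add hκ, ← Real.rpow_add hκ]
    norm_num
  calc ENNReal.ofReal |b x y z|
      ≤ hilbNorm w lam (1/2) x * hilbNorm w lam (3/2) y * hilbNorm w lam (1/2) z := hb x y z
    _ ≤ (ENNReal.ofReal (κ ^ (-(1/6) : ℝ)) * hilbNorm w lam (5/6) x) *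
          (ENNReal.ofReal (κ ^ (1/3 : ℝ)) * hilbNorm w lam (5/6) y) *
          (ENNReal.ofReal (κ ^ (-(1/6) : ℝ)) * hilbNorm w lam (5/6) z) := by
        gcongr <;> exact high ‹_›
    _ = ENNReal.ofReal (κ ^ (-(1/6) : ℝ)) * ENNReal.ofReal (κ ^ (1/3 : ℝ)) *
          ENNReal.ofReal (κ ^ (-(1/6) : ℝ)) *
          (hilbNorm w lam (5/6) x * hilbNorm w lam (5/6) y * hilbNorm w lam (5/6) z) := by
        ring
    _ = hilbNorm w lam (5/6) x * hilbNorm w lam (5/6) y * hilbNorm w lam (5/6) z := by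
        rw [hcancel, one_mul]

lemma inner_eq_ite_of_add_eq {u ul uh : H} (hdecomp : u = ul + uh)
    (hul : ∀ n, ⟪ul, w n⟫_ℝ = if lam n ≤ κ then ⟪u, w n⟫_ℝ else 0) (n : ℕ) :
    ⟪uh, w n⟫_ℝ = if lam n ≤ κ then 0 else ⟪u, w n⟫_ℝ := by
  have : ⟪uh, w n⟫_ℝ = ⟪u, w n⟫_ℝ - ⟪ul, w n⟫_ℝ := by rw [hdecomp, inner_add_left]; ring
  rw [this, hul n]
  split_ifs <;> ring

lemma tendsto_hilbNorm_nhds_zero_of_inner_eq_ite {s : ℝ} {u : H} (hu : hilbNorm w lam s u ≠ ⊤)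
    {v : ℝ → H} (hv : ∀ κ n, ⟪v κ, w n⟫_ℝ = if lam n ≤ κ then 0 else ⟪u, w n⟫_ℝ) :
    Tendsto (fun κ => hilbNorm w lam s (v κ)) atTop (𝓝 0) := by
  have hsum : ∑' n, ENNReal.ofReal (lam n ^ s * ⟪u, w n⟫_ℝ ^ 2) ≠ ⊤ := by
    intro h
    apply hu
    rw [hilbNorm, h, ENNReal.top_rpow_of_pos (by norm_num)]
  have htail : Tendsto (fun κ => ∑' n, ENNReal.ofReal (lam n ^ s * ⟪v κ, w n⟫_ℝ ^ 2))
      atTop (𝓝 0) := by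
    simp only [← lintegral_count]
    rw [← lintegral_zero (μ := Measure.count (α := ℕ))]
    refine tendsto_lintegral_filter_of_dominated_convergence
      (fun n => ENNReal.ofReal (lam n ^ s * ⟪u, w n⟫_ℝ ^ 2))
      (Eventually.of_forall fun _ => measurable_of_countable _)
      (Eventually.of_forall fun κ => ae_of_all _ fun n => ?_) (by rwa [lintegral_count])
      (ae_of_all _ fun n => ?_)
    · rw [hv κ n]
      split_ifs <;> simp
    · refine tendsto_const_nhds.congr' ?_
      filter_upwards [eventually_ge_atTop (lam n)] with κ hκ
      simp [hv κ n, hκ]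
  simpa [hilbNorm, Function.comp_def] using
    (ENNReal.continuous_rpow_const (y := 1/2)).tendsto 0 |>.comp htail

lemma ofReal_abs_apply_lowPart_le (hpos : ∀ n, 0 < lam n)
    (hb₁ : ∀ x y z : H, ENNReal.ofReal |b x y z| ≤
      hilbNorm w lam (1/2) x * hilbNorm w lam (3/2) y * hilbNorm w lam (1/2) z)
    (hb₂ : ∀ x y z : H, ENNReal.ofReal |b x y z| ≤
      hilbNorm w lam (5/6) x * hilbNorm w lam 1 y * hilbNorm w lam (2/3) z)
    (hzero : ∀ x y : H, b x y y = 0) (hκ : 0 < κ) {u ul uh : H} (hdecomp : u = ul + uh)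
    (hul : ∀ n, ⟪ul, w n⟫_ℝ = if lam n ≤ κ then ⟪u, w n⟫_ℝ else 0) :
    ENNReal.ofReal |b u ul u| ≤
      2 * hilbNorm w lam (5/6) u ^ 2 * hilbNorm w lam (5/6) uh := by
  have huh := inner_eq_ite_of_add_eq hdecomp hul
  have hlow : IsLowFreq w lam κ ul := fun n hn => by rw [hul, if_neg hn.not_ge]
  have hhigh : IsHighFreq w lam κ uh := fun n hn => by rw [huh, if_pos hn]
  have hul_le : hilbNorm w lam (5/6) ul ≤ hilbNorm w lam (5/6) u :=
    hilbNorm_le_of_coeff_eq_or_eq_zero fun n => by rw [hul]; split_ifs <;> simp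
  have huh_le : hilbNorm w lam (5/6) uh ≤ hilbNorm w lam (5/6) u :=
    hilbNorm_le_of_coeff_eq_or_eq_zero fun n => by rw [huh]; split_ifs <;> simp
  have hsplit : b u ul u = b ul ul uh + b uh ul uh := by
    simp only [hdecomp, map_add, LinearMap.add_apply, hzero]
    ring
  have h₁ := ofReal_abs_le_of_isLowFreq_of_isHighFreq (x := ul) hpos hb₂ hκ hlow hhigh
  have h₂ := ofReal_abs_le_of_isHighFreq_of_isLowFreq_of_isHighFreq hpos hb₁ hκ hhigh hlow hhigh
  calc ENNReal.ofReal |b u ul u|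
      ≤ ENNReal.ofReal |b ul ul uh| + ENNReal.ofReal |b uh ul uh| := by
        rw [hsplit, ← ENNReal.ofReal_add (abs_nonneg _) (abs_nonneg _)]
        exact ENNReal.ofReal_le_ofReal (abs_add_le _ _)
    _ ≤ hilbNorm w lam (5/6) u * hilbNorm w lam (5/6) u * hilbNorm w lam (5/6) uh +
          hilbNorm w lam (5/6) u * hilbNorm w lam (5/6) u * hilbNorm w lam (5/6) uh := by
        gcongr
        · exact h₁.trans (by gcongr)
        · exact h₂.trans (by gcongr)
    _ = 2 * hilbNorm w lam (5/6) u ^ 2 * hilbNorm w lam (5/6) uh := by ring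

end Bounds

theorem b_low_flux_vanishes_general
    {H : Type*} [NormedAddCommGroup H] [InnerProductSpace ℝ H]
    (w : ℕ → H)
    (lam : ℕ → ℝ) (hpos : ∀ n, 0 < lam n)
    (b : H →ₗ[ℝ] H →ₗ[ℝ] H →ₗ[ℝ] ℝ)
    (hb₁ : ∀ x y z : H, ENNReal.ofReal |b x y z| ≤
      hilbNorm w lam (1/2) x * hilbNorm w lam (3/2) y * hilbNorm w lam (1/2) z)
    (hb₂ : ∀ x y z : H, ENNReal.ofReal |b x y z| ≤
      hilbNorm w lam (5/6) x * hilbNorm w lam 1 y * hilbNorm w lam (2/3) z)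
    (hzero : ∀ x y : H, b x y y = 0)
    (u : H) (hu : hilbNorm w lam (5/6) u ≠ ⊤)
    (ul uh : ℝ → H)
    (hdecomp : ∀ κ : ℝ, u = ul κ + uh κ)
    (hul : ∀ (κ : ℝ) n, ⟪ul κ, w n⟫_ℝ = if lam n ≤ κ then ⟪u, w n⟫_ℝ else 0) :
    (∀ κ : ℝ, 0 < κ → ENNReal.ofReal |b u (ul κ) u| ≤
      2 * hilbNorm w lam (5/6) u ^ 2 * hilbNorm w lam (5/6) (uh κ)) ∧
    Tendsto (fun κ : ℝ => b u (ul κ) u) atTop (nhds 0) := by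
  have hbound : ∀ κ : ℝ, 0 < κ → ENNReal.ofReal |b u (ul κ) u| ≤
      2 * hilbNorm w lam (5/6) u ^ 2 * hilbNorm w lam (5/6) (uh κ) := fun κ hκ =>
    ofReal_abs_apply_lowPart_le hpos hb₁ hb₂ hzero hκ (hdecomp κ) (hul κ)
  refine ⟨hbound, ?_⟩
  have hhigh : Tendsto (fun κ => 2 * hilbNorm w lam (5/6) u ^ 2 * hilbNorm w lam (5/6) (uh κ))
      atTop (𝓝 0) := by
    simpa using ENNReal.Tendsto.const_mul
      (tendsto_hilbNorm_nhds_zero_of_inner_eq_ite hu fun κ =>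
        inner_eq_ite_of_add_eq (hdecomp κ) (hul κ))
      (Or.inr (by finiteness))
  have habs : Tendsto (fun κ => ENNReal.ofReal |b u (ul κ) u|) atTop (𝓝 0) :=
    tendsto_of_tendsto_of_tendsto_of_le_of_le' tendsto_const_nhds hhigh
      (Eventually.of_forall fun _ => zero_le)
      ((eventually_gt_atTop 0).mono hbound)
  rw [tendsto_zero_iff_abs_tendsto_zero]
  simpa [Function.comp_def] using (ENNReal.tendsto_toReal ENNReal.zero_ne_top).comp habs

theorem b_low_flux_vanishes
    {H : Type*} [NormedAddCommGroup H] [InnerProductSpace ℝ H]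
    (w : ℕ → H) (hw : Orthonormal ℝ w)
    (lam : ℕ → ℝ) (hpos : ∀ n, 0 < lam n) (hmono : Monotone lam)
    (hinf : Tendsto lam atTop atTop)
    (b : H →ₗ[ℝ] H →ₗ[ℝ] H →ₗ[ℝ] ℝ)
    (hb₁ : ∀ x y z : H, ENNReal.ofReal |b x y z| ≤
      hilbNorm w lam (1/2) x * hilbNorm w lam (3/2) y * hilbNorm w lam (1/2) z)
    (hb₂ : ∀ x y z : H, ENNReal.ofReal |b x y z| ≤
      hilbNorm w lam (5/6) x * hilbNorm w lam 1 y * hilbNorm w lam (2/3) z)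
    (hanti : ∀ x y z : H, b x y z = - b x z y)
    (hzero : ∀ x y : H, b x y y = 0)
    (u : H) (hu : hilbNorm w lam (5/6) u ≠ ⊤)
    (ul uh : ℝ → H)
    (hdecomp : ∀ κ : ℝ, u = ul κ + uh κ)
    (hul : ∀ (κ : ℝ) n, ⟪ul κ, w n⟫_ℝ = if lam n ≤ κ then ⟪u, w n⟫_ℝ else 0) :
    (∀ κ : ℝ, 0 < κ → ENNReal.ofReal |b u (ul κ) u| ≤
      2 * hilbNorm w lam (5/6) u ^ 2 * hilbNorm w lam (5/6) (uh κ)) ∧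
    Tendsto (fun κ : ℝ => b u (ul κ) u) atTop (nhds 0) :=
  b_low_flux_vanishes_general w lam hpos b hb₁ hb₂ hzero u hu ul uh hdecomp hul
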